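/- For t ≥ 3, if a minimal connected dominating set of G_t contains exactly one vertex x_i of X, then it contains z and exactly one vertex y_j with j ≠ i; that is, it equals {x_i, z, y_j} for some j ≠ i. -/
import Mathlib


open SimpleGraph

/-- `D` is a connected dominating set of `G`. -/
def IsCDS {V : Type*} (G : SimpleGraph V) (D : Set V) : Prop :=
  (∀ v, v ∈ D ∨ ∃ u ∈ D, G.Adj u v) ∧ (G.induce D).Connected

/-- `D` is a minimal connected dominating set of `G`. -/
def IsMinCDS {V : Type*} (G : SimpleGraph V) (D : Set V) : Prop :=
  IsCDS G D ∧ ∀ D' : Set V, D' ⊂ D → ¬ IsCDS G D'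

/-- Vertex type of `G_t`: `X = inl i`, `Y = inr (inl j)`, `z = inr (inr ())`. -/
abbrev Vt (t : ℕ) := Fin t ⊕ Fin t ⊕ Unit

/-- Base relation of `G_t` (with the clique on `X`). -/
def GtRel (t : ℕ) : Vt t → Vt t → Prop
  | Sum.inl i, Sum.inl j => i ≠ j
  | Sum.inl i, Sum.inr (Sum.inl j) => i ≠ j
  | Sum.inr (Sum.inl _), Sum.inr (Sum.inr _) => True
  | _, _ => False

/-- Base relation of `G_t - E(X)` (no edges inside `X`). -/
def GtRel' (t : ℕ) : Vt t → Vt t → Prop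
  | Sum.inl i, Sum.inr (Sum.inl j) => i ≠ j
  | Sum.inr (Sum.inl _), Sum.inr (Sum.inr _) => True
  | _, _ => False

/-- The graph `G_t`. -/
def Gt (t : ℕ) : SimpleGraph (Vt t) := SimpleGraph.fromRel (GtRel t)

/-- Vertex type of `G_t^k`: `k` copies of `Vt t` plus a hub vertex `s = inr ()`. -/
abbrev Vtk (t k : ℕ) := (Fin k × Vt t) ⊕ Unit

/-- Relation of `G_t^k` built from a base relation on copies; the hub `s`
is adjacent to all `X`-vertices of all copies. -/
def GtkRel (t k : ℕ) (base : Vt t → Vt t → Prop) : Vtk t k → Vtk t k → Prop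
  | Sum.inl (c, u), Sum.inl (c', u') => c = c' ∧ base u u'
  | Sum.inl (_, Sum.inl _), Sum.inr _ => True
  | Sum.inr _, Sum.inl (_, Sum.inl _) => True
  | _, _ => False

/-- The graph `G_t^k` (copies of `G_t` with clique on `X`). -/
def Gtk (t k : ℕ) : SimpleGraph (Vtk t k) := SimpleGraph.fromRel (GtkRel t k (GtRel t))

/-- The graph `G_t^k` with the edges inside each `X`-set removed. -/
def Gtk' (t k : ℕ) : SimpleGraph (Vtk t k) := SimpleGraph.fromRel (GtkRel t k (GtRel' t))

lemma gt_adj {t : ℕ} {u v : Vt t} :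
    (Gt t).Adj u v ↔ u ≠ v ∧ (GtRel t u v ∨ GtRel t v u) := by
  simp [Gt]

theorem minCDS_with_exactly_one_X_vertex (t : ℕ) (ht : 3 ≤ t) (D : Set (Vt t))
    (hD : IsMinCDS (Gt t) D) (i : Fin t)
    (hone : {a : Fin t | Sum.inl a ∈ D} = {i}) :
    ∃ j : Fin t, j ≠ i ∧
      D = {Sum.inl i, Sum.inr (Sum.inr ()), Sum.inr (Sum.inl j)} := by
  obtain ⟨⟨hdom, hconn⟩, hmin⟩ := hD
  have hxi : (Sum.inl i : Vt t) ∈ D := by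
    have : i ∈ ({i} : Set (Fin t)) := rfl
    rw [← hone] at this; exact this
  have honly : ∀ a : Fin t, Sum.inl a ∈ D → a = i := by
    intro a ha
    have : a ∈ {a : Fin t | Sum.inl a ∈ D} := ha
    rw [hone] at this; exact this
  -- z ∈ D
  have hz : (Sum.inr (Sum.inr ()) : Vt t) ∈ D := by
    by_contra hzD
    -- no vertex of D is adjacent to y_i
    have hnoyi : ∀ u ∈ D, ¬ (Gt t).Adj u (Sum.inr (Sum.inl i)) := by
      rintro (a | b | ⟨⟩) hu hadj
      · obtain ⟨_, h⟩ := gt_adj.mp hadj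
        have hai : a ≠ i := by
          rcases h with h | h
          · exact h
          · simp [GtRel] at h
        exact hai (honly a hu)
      · obtain ⟨_, h⟩ := gt_adj.mp hadj
        rcases h with h | h <;> exact h
      · exact hzD hu
    have hyi : (Sum.inr (Sum.inl i) : Vt t) ∈ D := by
      rcases hdom (Sum.inr (Sum.inl i)) with h | ⟨u, hu, hadj⟩
      · exact h
      · exact absurd hadj (hnoyi u hu)
    have hr := hconn.preconnected ⟨Sum.inr (Sum.inl i), hyi⟩ ⟨Sum.inl i, hxi⟩
    obtain ⟨w⟩ := hr
    cases w with
    | cons hadj p =>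
      have : (Gt t).Adj (Sum.inr (Sum.inl i)) _ := hadj
      exact hnoyi _ (Subtype.mem _) this.symm
  -- find y_j in D
  obtain ⟨j, hjne, hyj⟩ : ∃ j : Fin t, j ≠ i ∧ (Sum.inr (Sum.inl j) : Vt t) ∈ D := by
    have hr := hconn.preconnected ⟨Sum.inl i, hxi⟩ ⟨Sum.inr (Sum.inr ()), hz⟩
    obtain ⟨w⟩ := hr
    cases w with
    | cons hadj p =>
      rename_i v
      have hv : v.1 ∈ D := v.2
      have hadj' : (Gt t).Adj (Sum.inl i) v.1 := hadj
      obtain ⟨hne, h⟩ := gt_adj.mp hadj'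
      rcases hv' : v.1 with a | b | ⟨⟩
      · exfalso
        rw [hv'] at hadj' hv
        have := honly a hv
        subst this
        exact hadj'.ne rfl
      · refine ⟨b, ?_, hv' ▸ hv⟩
        rw [hv'] at h
        rcases h with h | h
        · exact fun e => h e.symm
        · simp [GtRel] at h
      · exfalso
        rw [hv'] at h
        simp [GtRel] at h
  refine ⟨j, hjne, ?_⟩
  set S : Set (Vt t) :=
    {Sum.inl i, Sum.inr (Sum.inr ()), Sum.inr (Sum.inl j)} with hS
  have hsub : S ⊆ D := by
    rintro v (rfl | rfl | rfl)
    · exact hxi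
    · exact hz
    · exact hyj
  have hmemx : (Sum.inl i : Vt t) ∈ S := Or.inl rfl
  have hmemz : (Sum.inr (Sum.inr ()) : Vt t) ∈ S := Or.inr (Or.inl rfl)
  have hmemy : (Sum.inr (Sum.inl j) : Vt t) ∈ S := Or.inr (Or.inr rfl)
  have a1 : (Gt t).Adj (Sum.inl i) (Sum.inr (Sum.inl j)) := by
    rw [gt_adj]
    exact ⟨by simp, Or.inl (fun e => hjne e.symm)⟩
  have a2 : (Gt t).Adj (Sum.inr (Sum.inl j)) (Sum.inr (Sum.inr ())) := by
    rw [gt_adj]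
    exact ⟨by simp, Or.inl trivial⟩
  have hSCDS : IsCDS (Gt t) S := by
    constructor
    · rintro (a | b | ⟨⟩)
      · by_cases hai : a = i
        · exact Or.inl (hai ▸ hmemx)
        · refine Or.inr ⟨Sum.inl i, hmemx, ?_⟩
          rw [gt_adj]
          exact ⟨by simp [Ne.symm hai], Or.inl (Ne.symm hai)⟩
      · refine Or.inr ⟨Sum.inr (Sum.inr ()), hmemz, ?_⟩
        rw [gt_adj]
        exact ⟨by simp, Or.inr trivial⟩
      · exact Or.inl hmemz
    · have key : ∀ a : S, ((Gt t).induce S).Reachable a ⟨Sum.inr (Sum.inl j), hmemy⟩ := by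
        rintro ⟨v, hv⟩
        rcases hv with rfl | rfl | rfl
        · exact Adj.reachable (by exact a1)
        · exact (Adj.reachable (by exact a2)).symm
        · exact Reachable.refl _
      constructor
      · intro a b
        exact (key a).trans (key b).symm
  by_cases heq : D = S
  · exact heq
  · exact absurd hSCDS (hmin S ⟨hsub, fun h => heq (le_antisymm (fun x hx => h hx) hsub)⟩)
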